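/- arXiv:1709.03014 — 12 statements merged into one kernel-verified Lean document; each statement's English description precedes it below -/
import Mathlib

section
/- Let {αᵗ}_{t=0}^{k} and {βᵗ}_{t=0}^{k} be sequences of positive real numbers satisfying α^{t+1} ≤ (1 − αᵗβᵗ)·αᵗ for all t = 0, …, k−1. Then αᵏ ≤ α⁰ / (1 + α⁰·Σ_{t=0}^{k−1} βᵗ). -/
open scoped BigOperators

theorem recursion_bound (k : ℕ) (α β : ℕ → ℝ)
    (hα : ∀ t ≤ k, 0 < α t) (hβ : ∀ t ≤ k, 0 < β t)
    (hrec : ∀ t < k, α (t + 1) ≤ (1 - α t * β t) * α t) :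
    α k ≤ α 0 / (1 + α 0 * ∑ t ∈ Finset.range k, β t) := by
  have key : ∀ n ≤ k, 1 / α 0 + ∑ t ∈ Finset.range n, β t ≤ 1 / α n := by
    intro n hn
    induction n with
    | zero => simp
    | succ m ih =>
      have hm : m ≤ k := Nat.le_of_succ_le hn
      have hmk : m < k := hn
      have hαm := hα m hm
      have hαm1 := hα (m+1) hn
      have hβm := hβ m hm
      have hrec' := hrec m hmk
      have hpos : 0 < (1 - α m * β m) * α m := lt_of_lt_of_le hαm1 hrec'
      have h1 : 0 < 1 - α m * β m := by
        by_contra h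
        push_neg at h
        nlinarith
      rw [Finset.sum_range_succ]
      have step : 1 / α m + β m ≤ 1 / α (m + 1) := by
        have h2 : 1 / α (m + 1) ≥ 1 / ((1 - α m * β m) * α m) :=
          one_div_le_one_div_of_le hαm1 hrec'
        refine le_trans ?_ h2
        rw [div_add' _ _ _ hαm.ne', div_le_div_iff₀ hαm hpos]
        nlinarith [sq_nonneg (α m * β m)]
      have := ih hm
      linarith
  have hk := key k le_rfl
  have hα0 := hα 0 (Nat.zero_le k)
  have hαk := hα k le_rfl
  have hsum : 0 ≤ ∑ t ∈ Finset.range k, β t :=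
    Finset.sum_nonneg fun t ht => (hβ t (Finset.mem_range.mp ht).le).le
  have hden : 0 < 1 + α 0 * ∑ t ∈ Finset.range k, β t := by positivity
  rw [le_div_iff₀ hden]
  have h3 : (1 + α 0 * ∑ t ∈ Finset.range k, β t) / α 0 ≤ 1 / α k := by
    have : (1 + α 0 * ∑ t ∈ Finset.range k, β t) / α 0
        = 1 / α 0 + ∑ t ∈ Finset.range k, β t := by
      field_simp
    rw [this]; exact hk
  rw [div_le_div_iff₀ hα0 hαk] at h3
  linarith
end

section
/- Let f : ℝⁿ → ℝ be differentiable and L-smooth with L > 0, and suppose f ∈ W_PL(μ) with μ > 0 and associated global minimizer x*. Let x^{k+1} = x^k − (1/L)∇f(x^k) for all k ≥ 0, starting from x⁰ ∈ ℝⁿ, and let ξ(x) := f(x) − f(x*). Fix K ≥ 1 and assume f(xᵗ) > f(x*) for all t = 0, …, K−1. Then ξ(x^K) ≤ ξ(x⁰) / (1 + ξ(x⁰)·(μ/(2L))·Σ_{t=0}^{K−1} 1/‖xᵗ − x*‖²). -/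
open scoped RealInnerProductSpace BigOperators

/-!
A gradient step with step size `1/L` decreases the gap `ξ = f x - f x*` by at least
`‖∇f x‖² / (2L)`, and the weak PL inequality bounds this decrease from below by `c ξ²` with
`c = μ / (2L ‖x - x*‖²)`. A recursion `ξ' ≤ ξ - c ξ²` gives `1/ξ' ≥ 1/ξ + c`, so the reciprocal
gaps accumulate the constants `c_t`; this is the bound `ξ₀ / (1 + ξ₀ ∑ c_t)`.
-/

section Step

variable {E : Type*} [NormedAddCommGroup E] [InnerProductSpace ℝ E] {f : E → ℝ} {x g : E} {L : ℝ}

theorem apply_sub_smul_le_of_quadratic_upper_bound (hL : 0 < L)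
    (hsmooth : ∀ h, f (x + h) ≤ f x + ⟪g, h⟫ + L / 2 * ‖h‖ ^ 2) :
    f (x - (1 / L) • g) ≤ f x - ‖g‖ ^ 2 / (2 * L) := by
  have hinner : ⟪g, -((1 / L) • g)⟫ = -(1 / L) * ‖g‖ ^ 2 := by
    rw [inner_neg_right, real_inner_smul_right, real_inner_self_eq_norm_sq]; ring
  have hnorm : ‖-((1 / L) • g)‖ ^ 2 = (1 / L) ^ 2 * ‖g‖ ^ 2 := by
    rw [norm_neg, norm_smul, Real.norm_of_nonneg (by positivity)]; ring
  calc f (x - (1 / L) • g) ≤ f x + -(1 / L) * ‖g‖ ^ 2 + L / 2 * ((1 / L) ^ 2 * ‖g‖ ^ 2) := by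
        simpa only [← sub_eq_add_neg, hinner, hnorm] using hsmooth (-((1 / L) • g))
    _ = f x - ‖g‖ ^ 2 / (2 * L) := by field_simp; ring

theorem mul_sq_div_sq_le_sq_of_sqrt_mul_le {μ ξ a d : ℝ} (hμ : 0 ≤ μ) (hξ : 0 ≤ ξ)
    (h : √μ * ξ ≤ a * d) : μ * ξ ^ 2 / d ^ 2 ≤ a ^ 2 := by
  rcases eq_or_ne d 0 with rfl | hd
  · simp only [ne_eq, OfNat.ofNat_ne_zero, not_false_eq_true, zero_pow, div_zero]
    positivity
  have hsq : μ * ξ ^ 2 ≤ a ^ 2 * d ^ 2 := by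
    simpa only [mul_pow, Real.sq_sqrt hμ] using pow_le_pow_left₀ (by positivity) h 2
  rwa [div_le_iff₀ (by positivity)]

theorem apply_sub_smul_sub_le_of_weakPL {μ : ℝ} {xstar : E} (hL : 0 < L) (hμ : 0 ≤ μ)
    (hsmooth : ∀ h, f (x + h) ≤ f x + ⟪g, h⟫ + L / 2 * ‖h‖ ^ 2)
    (hWPL : √μ * (f x - f xstar) ≤ ‖g‖ * ‖x - xstar‖) (hx : f xstar ≤ f x) :
    f (x - (1 / L) • g) - f xstar ≤
      (f x - f xstar) - μ / (2 * L) * (1 / ‖x - xstar‖ ^ 2) * (f x - f xstar) ^ 2 := by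
  have hdecrease := apply_sub_smul_le_of_quadratic_upper_bound hL hsmooth
  have hPL := mul_sq_div_sq_le_sq_of_sqrt_mul_le hμ (sub_nonneg.2 hx) hWPL
  have hrewrite : μ / (2 * L) * (1 / ‖x - xstar‖ ^ 2) * (f x - f xstar) ^ 2 =
      μ * (f x - f xstar) ^ 2 / ‖x - xstar‖ ^ 2 / (2 * L) := by
    field_simp
  rw [hrewrite]
  linarith [div_le_div_of_nonneg_right hPL (by positivity : (0 : ℝ) ≤ 2 * L)]

end Step

theorem le_div_one_add_mul_add_of_le_sub_mul_sq {ξ₀ ξ ξ' S c : ℝ} (hξ₀ : 0 ≤ ξ₀) (hS : 0 ≤ S)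
    (hc : 0 ≤ c) (hstep : ξ' ≤ ξ - c * ξ ^ 2) (hξ : ξ ≤ ξ₀ / (1 + ξ₀ * S)) :
    ξ' ≤ ξ₀ / (1 + ξ₀ * (S + c)) := by
  rcases le_or_gt ξ' 0 with hξ' | hξ'
  · exact hξ'.trans (by positivity)
  have hξpos : 0 < ξ := by nlinarith
  have hcξ : c * ξ < 1 := by nlinarith
  have hξS : ξ * (1 + ξ₀ * S) ≤ ξ₀ := (le_div_iff₀ (by positivity)).1 hξ
  rw [le_div_iff₀ (by positivity)]
  nlinarith [mul_le_mul_of_nonneg_right hstep (by positivity : 0 ≤ ξ₀ * c),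
    mul_le_mul_of_nonneg_right hξS (sub_nonneg.2 hcξ.le), mul_nonneg hξ₀ (sq_nonneg (c * ξ))]

theorem gradient_descent_WPL_rate_general {n : ℕ} (f : EuclideanSpace ℝ (Fin n) → ℝ) (L μ : ℝ)
    (hL : 0 < L) (hμ : 0 < μ)
    (hsmooth : ∀ x h : EuclideanSpace ℝ (Fin n),
      f (x + h) ≤ f x + ⟪gradient f x, h⟫ + L / 2 * ‖h‖ ^ 2)
    (xstar : EuclideanSpace ℝ (Fin n))
    (hWPL : ∀ x : EuclideanSpace ℝ (Fin n),
      Real.sqrt μ * (f x - f xstar) ≤ ‖gradient f x‖ * ‖x - xstar‖)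
    (x : ℕ → EuclideanSpace ℝ (Fin n))
    (hiter : ∀ k : ℕ, x (k + 1) = x k - (1 / L) • gradient f (x k))
    (K : ℕ)
    (hpos : ∀ t < K, f xstar < f (x t)) :
    f (x K) - f xstar ≤
      (f (x 0) - f xstar) /
        (1 + (f (x 0) - f xstar) * (μ / (2 * L)) *
          ∑ t ∈ Finset.range K, 1 / ‖x t - xstar‖ ^ 2) := by
  induction K with
  | zero => simp
  | succ k ih =>
    have hgap := hpos k k.lt_succ_self
    have hstep := apply_sub_smul_sub_le_of_weakPL hL hμ.le (hsmooth (x k)) (hWPL (x k)) hgap.le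
    rw [← hiter] at hstep
    have hprev := ih fun t ht => hpos t (by omega)
    rw [mul_assoc] at hprev ⊢
    rw [Finset.sum_range_succ, mul_add]
    exact le_div_one_add_mul_add_of_le_sub_mul_sq (sub_nonneg.2 (hpos 0 k.succ_pos).le)
      (by positivity) (by positivity) hstep hprev

theorem gradient_descent_WPL_rate {n : ℕ} (f : EuclideanSpace ℝ (Fin n) → ℝ) (L μ : ℝ)
    (hL : 0 < L) (hμ : 0 < μ) (hdiff : Differentiable ℝ f)
    (hsmooth : ∀ x h : EuclideanSpace ℝ (Fin n),
      f (x + h) ≤ f x + ⟪gradient f x, h⟫ + L / 2 * ‖h‖ ^ 2)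
    (xstar : EuclideanSpace ℝ (Fin n)) (hmin : ∀ y, f xstar ≤ f y)
    (hWPL : ∀ x : EuclideanSpace ℝ (Fin n),
      Real.sqrt μ * (f x - f xstar) ≤ ‖gradient f x‖ * ‖x - xstar‖)
    (x : ℕ → EuclideanSpace ℝ (Fin n))
    (hiter : ∀ k : ℕ, x (k + 1) = x k - (1 / L) • gradient f (x k))
    (K : ℕ) (hK : 1 ≤ K)
    (hpos : ∀ t < K, f xstar < f (x t)) :
    f (x K) - f xstar ≤
      (f (x 0) - f xstar) /
        (1 + (f (x 0) - f xstar) * (μ / (2 * L)) *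
          ∑ t ∈ Finset.range K, 1 / ‖x t - xstar‖ ^ 2) :=
  gradient_descent_WPL_rate_general f L μ hL hμ hsmooth xstar hWPL x hiter K hpos
end

section
/- Let f : ℝⁿ → ℝ be differentiable and L-smooth with L > 0, and suppose f ∈ W_PL(μ) with μ > 0 and associated global minimizer x*. Let x^{k+1} = x^k − (1/L)∇f(x^k) for all k ≥ 0, starting from x⁰ ∈ ℝⁿ, and let ξ(x) := f(x) − f(x*). Fix k ≥ 1 and R > 0, and assume that f(xᵗ) > f(x*) and ‖xᵗ − x*‖ ≤ R for all t = 0, …, k−1. Then ξ(xᵏ) ≤ 2LR²/(μk). -/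
open scoped RealInnerProductSpace BigOperators

theorem gradient_descent_WPL_rate_bounded {n : ℕ} (f : EuclideanSpace ℝ (Fin n) → ℝ) (L μ R : ℝ)
    (hL : 0 < L) (hμ : 0 < μ) (hR : 0 < R) (hdiff : Differentiable ℝ f)
    (hsmooth : ∀ x h : EuclideanSpace ℝ (Fin n),
      f (x + h) ≤ f x + ⟪gradient f x, h⟫ + L / 2 * ‖h‖ ^ 2)
    (xstar : EuclideanSpace ℝ (Fin n)) (hmin : ∀ y, f xstar ≤ f y)
    (hWPL : ∀ x : EuclideanSpace ℝ (Fin n),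
      Real.sqrt μ * (f x - f xstar) ≤ ‖gradient f x‖ * ‖x - xstar‖)
    (x : ℕ → EuclideanSpace ℝ (Fin n))
    (hiter : ∀ j : ℕ, x (j + 1) = x j - (1 / L) • gradient f (x j))
    (k : ℕ) (hk : 1 ≤ k)
    (hpos : ∀ t < k, f xstar < f (x t))
    (hbd : ∀ t < k, ‖x t - xstar‖ ≤ R) :
    f (x k) - f xstar ≤ 2 * L * R ^ 2 / (μ * k) := by
  set ξ : ℕ → ℝ := fun t => f (x t) - f xstar with hξ
  have hkpos : (0:ℝ) < k := by exact_mod_cast Nat.lt_of_lt_of_le Nat.zero_lt_one hk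
  have hRHSpos : 0 < 2 * L * R ^ 2 / (μ * k) := by positivity
  by_cases hcase : ξ k ≤ 0
  · simp only [hξ] at hcase; linarith
  push_neg at hcase
  -- all ξ t > 0 for t ≤ k
  have hξpos : ∀ t ≤ k, 0 < ξ t := by
    intro t ht
    rcases lt_or_eq_of_le ht with h | h
    · have := hpos t h; simp only [hξ]; linarith
    · rw [h]; exact hcase
  set c : ℝ := μ / (2 * L * R ^ 2) with hc
  have hcpos : 0 < c := by positivity
  -- descent lemma
  have hdesc : ∀ t, f (x (t+1)) ≤ f (x t) - ‖gradient f (x t)‖ ^ 2 / (2 * L) := by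
    intro t
    have h1 := hsmooth (x t) (-((1 / L) • gradient f (x t)))
    have h2 : x t + -((1 / L) • gradient f (x t)) = x (t+1) := by
      rw [hiter t]; abel
    rw [h2] at h1
    have h3 : ⟪gradient f (x t), -((1 / L) • gradient f (x t))⟫
        = -(1/L) * ‖gradient f (x t)‖ ^ 2 := by
      rw [inner_neg_right, real_inner_smul_right, real_inner_self_eq_norm_sq]
      ring
    have h4 : ‖-((1 / L) • gradient f (x t))‖ ^ 2 = (1/L)^2 * ‖gradient f (x t)‖ ^ 2 := by
      rw [norm_neg, norm_smul, mul_pow]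
      congr 1
      rw [Real.norm_eq_abs, sq_abs]
    rw [h3, h4] at h1
    have hL' : L ≠ 0 := ne_of_gt hL
    calc f (x (t+1)) ≤ f (x t) + -(1/L) * ‖gradient f (x t)‖ ^ 2
          + L / 2 * ((1/L)^2 * ‖gradient f (x t)‖ ^ 2) := h1
      _ = f (x t) - ‖gradient f (x t)‖ ^ 2 / (2 * L) := by field_simp; ring
  -- key recursion for t < k
  have hrec : ∀ t < k, ξ (t+1) ≤ ξ t - c * ξ t ^ 2 := by
    intro t ht
    have hwpl := hWPL (x t)
    have hbdt := hbd t ht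
    have hxt := hξpos t (le_of_lt ht)
    have hg : Real.sqrt μ * ξ t ≤ ‖gradient f (x t)‖ * R := by
      calc Real.sqrt μ * ξ t ≤ ‖gradient f (x t)‖ * ‖x t - xstar‖ := hwpl
        _ ≤ ‖gradient f (x t)‖ * R := by
            exact mul_le_mul_of_nonneg_left hbdt (norm_nonneg _)
    have hsq : μ * ξ t ^ 2 ≤ ‖gradient f (x t)‖ ^ 2 * R ^ 2 := by
      have hls : 0 ≤ Real.sqrt μ * ξ t := by positivity
      have := mul_self_le_mul_self hls hg
      have hμsq : Real.sqrt μ * Real.sqrt μ = μ := Real.mul_self_sqrt hμ.le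
      nlinarith [this, hμsq]
    have hgge : c * ξ t ^ 2 ≤ ‖gradient f (x t)‖ ^ 2 / (2 * L) := by
      rw [hc, div_mul_eq_mul_div, div_le_div_iff₀ (by positivity) (by positivity)]
      nlinarith [hsq]
    have := hdesc t
    simp only [hξ]
    linarith
  -- monotonicity of inverse: c * t ≤ 1/ξ t for t ≤ k
  have hind : ∀ t ≤ k, c * t ≤ 1 / ξ t := by
    intro t
    induction t with
    | zero =>
      intro _
      rw [Nat.cast_zero, mul_zero]
      exact le_of_lt (one_div_pos.mpr (hξpos 0 (Nat.zero_le k)))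
    | succ m ih =>
      intro hm1
      have hm : m < k := Nat.lt_of_succ_le hm1
      have ihm := ih hm.le
      have hxm := hξpos m hm.le
      have hxm1 := hξpos (m+1) hm1
      have hrecm := hrec m hm
      have key : (1 / ξ m + c) * ξ (m+1) ≤ 1 := by
        have h1 : (1 / ξ m + c) * ξ (m+1) ≤ (1 / ξ m + c) * (ξ m - c * ξ m ^ 2) := by
          exact mul_le_mul_of_nonneg_left hrecm
            (le_of_lt (add_pos (one_div_pos.mpr hxm) hcpos))
        have h2 : (1 / ξ m + c) * (ξ m - c * ξ m ^ 2) = 1 - (c * ξ m) ^ 2 := by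
          field_simp
          ring
        nlinarith [sq_nonneg (c * ξ m)]
      have h3 : 1 / ξ m + c ≤ 1 / ξ (m+1) := by
        rw [le_div_iff₀ hxm1]
        exact key
      push_cast
      nlinarith
  have hfin := hind k le_rfl
  have hξk := hcase
  rw [le_div_iff₀ hξk, hc, div_mul_eq_mul_div, div_mul_eq_mul_div,
    div_le_one (by positivity : (0:ℝ) < 2 * L * R ^ 2)] at hfin
  show ξ k ≤ _
  rw [le_div_iff₀ (by positivity : (0:ℝ) < μ * k)]
  nlinarith [hfin]
end

section
/- Let f : ℝⁿ → ℝ be differentiable and L-smooth with L > 0, with global minimizer x*, and set ξ(x) := f(x) − f(x*). Let φ : ℝ → ℝ be nondecreasing with φ(ε) > 0, and assume the gradient-domination property ξ(x) ≤ φ(‖∇f(x)‖²) for all x ∈ ℝⁿ. Let x^{t+1} = x^t − (1/L)∇f(x^t) starting from x⁰ with ξ(x⁰) > 0. If 0 < ε ≤ 2L·ξ(x⁰) and k is a natural number with k ≥ (2L·ξ(x⁰)/ε)·log(ξ(x⁰)/φ(ε)), then min { ξ(xᵗ) : t = 0, 1, …, k } ≤ φ(ε). -/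
open scoped RealInnerProductSpace BigOperators

/-!
A gradient step of length `1/L` on an `L`-smooth function decreases `f` by at least
`‖∇f‖² / (2L)`. As long as `ξ(xᵗ) > φ(ε)`, gradient domination and monotonicity of `φ` force
`‖∇f(xᵗ)‖² ≥ ε`, so `ξ` drops by at least `ε / (2L)` per step; this can happen for at most
`2L (ξ(x⁰) - φ(ε)) / ε ≤ (2L ξ(x⁰) / ε) log (ξ(x⁰) / φ(ε))` steps, using `1 - 1/u ≤ log u`.
-/

open Real

theorem sufficient_decrease_of_upper_quadratic {E : Type*} [NormedAddCommGroup E]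
    [InnerProductSpace ℝ E] {f : E → ℝ} {L : ℝ} (hL : 0 < L) {x g : E}
    (hf : ∀ h, f (x + h) ≤ f x + ⟪g, h⟫ + L / 2 * ‖h‖ ^ 2) :
    f (x - (1 / L) • g) ≤ f x - ‖g‖ ^ 2 / (2 * L) := by
  have hinner : ⟪g, -((1 / L) • g)⟫ = -(1 / L) * ‖g‖ ^ 2 := by
    rw [inner_neg_right, inner_smul_right, real_inner_self_eq_norm_sq]
    ring
  have hnorm : ‖-((1 / L) • g)‖ ^ 2 = (1 / L) ^ 2 * ‖g‖ ^ 2 := by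
    rw [norm_neg, norm_smul, mul_pow, Real.norm_eq_abs, sq_abs]
  calc f (x - (1 / L) • g)
      ≤ f x + -(1 / L) * ‖g‖ ^ 2 + L / 2 * ((1 / L) ^ 2 * ‖g‖ ^ 2) := by
        simpa only [← sub_eq_add_neg, hinner, hnorm] using hf (-((1 / L) • g))
    _ = f x - ‖g‖ ^ 2 / (2 * L) := by field_simp; ring

theorem exists_le_of_sub_le_of_lt {ξ : ℕ → ℝ} {c δ : ℝ}
    (hstep : ∀ t, c < ξ t → ξ (t + 1) ≤ ξ t - δ) {k : ℕ} (hk : ξ 0 - c ≤ k * δ) :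
    ∃ t ≤ k, ξ t ≤ c := by
  by_contra! habove
  have hdecay : ∀ t ≤ k, ξ t ≤ ξ 0 - t * δ := by
    intro t
    induction t with
    | zero => simp
    | succ t ih =>
      intro ht
      have := hstep t (habove t (by omega))
      push_cast
      linarith [ih (by omega)]
  linarith [hdecay k le_rfl, habove k le_rfl]

theorem sub_le_mul_of_div_mul_log_le {a b δ k : ℝ} (hb : 0 < b) (hδ : 0 < δ) (hk₀ : 0 ≤ k)
    (hk : a / δ * log (a / b) ≤ k) : a - b ≤ k * δ := by
  rcases le_or_gt a b with hab | hba
  · linarith [mul_nonneg hk₀ hδ.le]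
  have ha : 0 < a := hb.trans hba
  have hlog : a - b ≤ a * log (a / b) := by
    have := Real.one_sub_inv_le_log_of_pos (div_pos ha hb)
    rw [inv_div] at this
    calc a - b = a * (1 - b / a) := by field_simp
      _ ≤ a * log (a / b) := by gcongr
  calc a - b ≤ a / δ * log (a / b) * δ := by rwa [div_mul_eq_mul_div, div_mul_cancel₀ _ hδ.ne']
    _ ≤ k * δ := by gcongr

theorem gradient_dominated_rate_general {n : ℕ} (f : EuclideanSpace ℝ (Fin n) → ℝ) (L : ℝ) (hL : 0 < L)
    (hsmooth : ∀ x h : EuclideanSpace ℝ (Fin n),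
      f (x + h) ≤ f x + ⟪gradient f x, h⟫ + L / 2 * ‖h‖ ^ 2)
    (xstar : EuclideanSpace ℝ (Fin n))
    (φ : ℝ → ℝ) (hφmono : Monotone φ)
    (hdom : ∀ x : EuclideanSpace ℝ (Fin n), f x - f xstar ≤ φ (‖gradient f x‖ ^ 2))
    (x : ℕ → EuclideanSpace ℝ (Fin n))
    (hiter : ∀ t : ℕ, x (t + 1) = x t - (1 / L) • gradient f (x t))
    (ε : ℝ) (hε : 0 < ε) (hφε : 0 < φ ε)
    (k : ℕ)
    (hk : 2 * L * (f (x 0) - f xstar) / ε * Real.log ((f (x 0) - f xstar) / φ ε) ≤ (k : ℝ)) :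
    ∃ t ≤ k, f (x t) - f xstar ≤ φ ε := by
  have hstep : ∀ t, φ ε < f (x t) - f xstar →
      f (x (t + 1)) - f xstar ≤ f (x t) - f xstar - ε / (2 * L) := by
    intro t hgap
    have hgrad : ε ≤ ‖gradient f (x t)‖ ^ 2 := by
      by_contra! hlt
      exact hgap.not_ge ((hdom (x t)).trans (hφmono hlt.le))
    have hdecr := sufficient_decrease_of_upper_quadratic hL (hsmooth (x t))
    rw [← hiter] at hdecr
    have : ε / (2 * L) ≤ ‖gradient f (x t)‖ ^ 2 / (2 * L) := by gcongr
    linarith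
  refine exists_le_of_sub_le_of_lt (ξ := fun t => f (x t) - f xstar) hstep ?_
  refine sub_le_mul_of_div_mul_log_le hφε (by positivity) k.cast_nonneg ?_
  convert hk using 2
  field_simp

theorem gradient_dominated_rate {n : ℕ} (f : EuclideanSpace ℝ (Fin n) → ℝ) (L : ℝ) (hL : 0 < L)
    (hdiff : Differentiable ℝ f)
    (hsmooth : ∀ x h : EuclideanSpace ℝ (Fin n),
      f (x + h) ≤ f x + ⟪gradient f x, h⟫ + L / 2 * ‖h‖ ^ 2)
    (xstar : EuclideanSpace ℝ (Fin n)) (hmin : ∀ y, f xstar ≤ f y)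
    (φ : ℝ → ℝ) (hφmono : Monotone φ)
    (hdom : ∀ x : EuclideanSpace ℝ (Fin n), f x - f xstar ≤ φ (‖gradient f x‖ ^ 2))
    (x : ℕ → EuclideanSpace ℝ (Fin n))
    (hiter : ∀ t : ℕ, x (t + 1) = x t - (1 / L) • gradient f (x t))
    (hξ0 : 0 < f (x 0) - f xstar)
    (ε : ℝ) (hε : 0 < ε) (hφε : 0 < φ ε)
    (hεle : ε ≤ 2 * L * (f (x 0) - f xstar))
    (k : ℕ)
    (hk : 2 * L * (f (x 0) - f xstar) / ε * Real.log ((f (x 0) - f xstar) / φ ε) ≤ (k : ℝ)) :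
    ∃ t ≤ k, f (x t) - f xstar ≤ φ ε :=
  gradient_dominated_rate_general f L hL hsmooth xstar φ hφmono hdom x hiter ε hε hφε k hk
end

section
/- Let f : ℝⁿ → ℝ be differentiable with continuous gradient, let x* be a global minimizer of f, and suppose there is a constant c > 0 such that ∫₀¹ ‖∇f(x* + t(x − x*))‖ dt ≤ c·‖∇f(x)‖ for every x ∈ ℝⁿ. Then (1/c)·(f(x) − f(x*)) ≤ ‖∇f(x)‖ · ‖x − x*‖ for all x ∈ ℝⁿ; that is, f ∈ W_PL(1/c²). -/
open scoped RealInnerProductSpace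

section SegmentBound

variable {E : Type*} [NormedAddCommGroup E] [InnerProductSpace ℝ E] [CompleteSpace E]
  {f : E → ℝ}

theorem integral_inner_gradient_segment_eq_sub (hdiff : Differentiable ℝ f)
    (hcont : Continuous (gradient f)) (x y : E) :
    ∫ t in (0:ℝ)..1, ⟪gradient f (y + t • (x - y)), x - y⟫ = f x - f y := by
  have hpath : ∀ t : ℝ, HasDerivAt (fun s : ℝ => y + s • (x - y)) (x - y) t := fun t => by
    simpa using ((hasDerivAt_id t).smul_const (x - y)).const_add y
  have hderiv : ∀ t : ℝ, HasDerivAt (fun s : ℝ => f (y + s • (x - y)))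
      ⟪gradient f (y + t • (x - y)), x - y⟫ t := fun t =>
    (hdiff _).hasGradientAt.hasFDerivAt.comp_hasDerivAt t (hpath t)
  have hinner : Continuous fun t : ℝ => ⟪gradient f (y + t • (x - y)), x - y⟫ := by fun_prop
  simpa using intervalIntegral.integral_eq_sub_of_hasDerivAt (fun t _ => hderiv t)
    (hinner.intervalIntegrable 0 1)

theorem sub_le_integral_norm_gradient_segment_mul_norm (hdiff : Differentiable ℝ f)
    (hcont : Continuous (gradient f)) (x y : E) :
    f x - f y ≤ (∫ t in (0:ℝ)..1, ‖gradient f (y + t • (x - y))‖) * ‖x - y‖ := by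
  rw [← integral_inner_gradient_segment_eq_sub hdiff hcont x y,
    ← intervalIntegral.integral_mul_const]
  exact intervalIntegral.integral_mono_on zero_le_one
    (Continuous.intervalIntegrable (by fun_prop) 0 1)
    (Continuous.intervalIntegrable (by fun_prop) 0 1)
    fun t _ => real_inner_le_norm _ _

end SegmentBound

theorem integral_gradient_bound_implies_WPL_general {n : ℕ} (f : EuclideanSpace ℝ (Fin n) → ℝ)
    (hdiff : Differentiable ℝ f) (hcont : Continuous fun x => gradient f x)
    (xstar : EuclideanSpace ℝ (Fin n))
    (c : ℝ) (hc : 0 < c)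
    (hint : ∀ x : EuclideanSpace ℝ (Fin n),
      (∫ t in (0:ℝ)..1, ‖gradient f (xstar + t • (x - xstar))‖) ≤ c * ‖gradient f x‖) :
    ∀ x : EuclideanSpace ℝ (Fin n),
      1 / c * (f x - f xstar) ≤ ‖gradient f x‖ * ‖x - xstar‖ := by
  intro x
  rw [one_div, inv_mul_le_iff₀ hc]
  calc f x - f xstar
      ≤ (∫ t in (0:ℝ)..1, ‖gradient f (xstar + t • (x - xstar))‖) * ‖x - xstar‖ :=
        sub_le_integral_norm_gradient_segment_mul_norm hdiff hcont x xstar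
    _ ≤ c * ‖gradient f x‖ * ‖x - xstar‖ := mul_le_mul_of_nonneg_right (hint x) (norm_nonneg _)
    _ = c * (‖gradient f x‖ * ‖x - xstar‖) := mul_assoc _ _ _

theorem integral_gradient_bound_implies_WPL {n : ℕ} (f : EuclideanSpace ℝ (Fin n) → ℝ)
    (hdiff : Differentiable ℝ f) (hcont : Continuous fun x => gradient f x)
    (xstar : EuclideanSpace ℝ (Fin n)) (hmin : ∀ y, f xstar ≤ f y)
    (c : ℝ) (hc : 0 < c)
    (hint : ∀ x : EuclideanSpace ℝ (Fin n),
      (∫ t in (0:ℝ)..1, ‖gradient f (xstar + t • (x - xstar))‖) ≤ c * ‖gradient f x‖) :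
    ∀ x : EuclideanSpace ℝ (Fin n),
      1 / c * (f x - f xstar) ≤ ‖gradient f x‖ * ‖x - xstar‖ :=
  integral_gradient_bound_implies_WPL_general f hdiff hcont xstar c hc hint
end

section
/- Let f : ℝⁿ → ℝ be differentiable and L-smooth with L > 0, let x* be a global minimizer of f, and suppose f satisfies the Polyak–Łojasiewicz inequality (1/2)‖∇f(x)‖² ≥ μ·(f(x) − f(x*)) for all x ∈ ℝⁿ, where μ > 0. Then √(4μ/L) · (f(x) − f(x*)) ≤ ‖∇f(x)‖ · ‖x − x*‖ for all x ∈ ℝⁿ; that is, S_PL(μ) ⊆ W_PL(4μ/L) within the class of L-smooth functions. -/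
open scoped RealInnerProductSpace BigOperators

theorem SPL_subset_WPL {n : ℕ} (f : EuclideanSpace ℝ (Fin n) → ℝ) (L μ : ℝ)
    (hL : 0 < L) (hμ : 0 < μ) (hdiff : Differentiable ℝ f)
    (hsmooth : ∀ x h : EuclideanSpace ℝ (Fin n),
      f (x + h) ≤ f x + ⟪gradient f x, h⟫ + L / 2 * ‖h‖ ^ 2)
    (xstar : EuclideanSpace ℝ (Fin n)) (hmin : ∀ y, f xstar ≤ f y)
    (hPL : ∀ x : EuclideanSpace ℝ (Fin n),
      μ * (f x - f xstar) ≤ 1 / 2 * ‖gradient f x‖ ^ 2) :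
    ∀ x : EuclideanSpace ℝ (Fin n),
      Real.sqrt (4 * μ / L) * (f x - f xstar) ≤ ‖gradient f x‖ * ‖x - xstar‖ := by
  intro x
  have hgrad0 : gradient f xstar = 0 := by
    have hloc : IsLocalMin f xstar := (isMinOn_univ_iff.mpr hmin).isLocalMin Filter.univ_mem
    have := hloc.fderiv_eq_zero
    simp [gradient, this]
  have hquad : f x - f xstar ≤ L / 2 * ‖x - xstar‖ ^ 2 := by
    have := hsmooth xstar (x - xstar)
    simp [hgrad0] at this
    linarith
  have ha : 0 ≤ f x - f xstar := sub_nonneg.mpr (hmin x)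
  set a := f x - f xstar with hadef
  set g := ‖gradient f x‖
  set d := ‖x - xstar‖
  have hg : 0 ≤ g := norm_nonneg _
  have hd : 0 ≤ d := norm_nonneg _
  have h1 : 2 * μ * a ≤ g ^ 2 := by have := hPL x; nlinarith
  have h2 : 2 / L * a ≤ d ^ 2 := by
    rw [div_mul_eq_mul_div, div_le_iff₀ hL] at *
    nlinarith
  have hsq : 4 * μ / L * a ^ 2 ≤ (g * d) ^ 2 := by
    have h3 : (2 * μ * a) * (2 / L * a) ≤ g ^ 2 * d ^ 2 := by
      apply mul_le_mul h1 h2 (by positivity) (by positivity)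
    calc 4 * μ / L * a ^ 2 = (2 * μ * a) * (2 / L * a) := by ring
    _ ≤ g ^ 2 * d ^ 2 := h3
    _ = (g * d) ^ 2 := by ring
  calc Real.sqrt (4 * μ / L) * a = Real.sqrt (4 * μ / L * a ^ 2) := by
        rw [Real.sqrt_mul (by positivity), Real.sqrt_sq ha]
    _ ≤ Real.sqrt ((g * d) ^ 2) := Real.sqrt_le_sqrt hsq
    _ = g * d := Real.sqrt_sq (by positivity)
end

section
/- Let f : ℝⁿ → ℝ be differentiable and L-smooth with L > 0, let x* be a global minimizer of f, and suppose there exists c > 0 such that ‖x − x*‖ ≤ c·‖∇f(x)‖ for all x ∈ ℝⁿ. Then (2/(Lc))·(f(x) − f(x*)) ≤ ‖∇f(x)‖ · ‖x − x*‖ for all x ∈ ℝⁿ; that is, f ∈ W_PL(4/(L²c²)). -/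
open scoped RealInnerProductSpace BigOperators

theorem error_bound_implies_WPL {n : ℕ} (f : EuclideanSpace ℝ (Fin n) → ℝ) (L : ℝ) (hL : 0 < L)
    (hdiff : Differentiable ℝ f)
    (hsmooth : ∀ x h : EuclideanSpace ℝ (Fin n),
      f (x + h) ≤ f x + ⟪gradient f x, h⟫ + L / 2 * ‖h‖ ^ 2)
    (xstar : EuclideanSpace ℝ (Fin n)) (hmin : ∀ y, f xstar ≤ f y)
    (c : ℝ) (hc : 0 < c)
    (hbd : ∀ x : EuclideanSpace ℝ (Fin n), ‖x - xstar‖ ≤ c * ‖gradient f x‖) :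
    ∀ x : EuclideanSpace ℝ (Fin n),
      2 / (L * c) * (f x - f xstar) ≤ ‖gradient f x‖ * ‖x - xstar‖ := by
  intro x
  have hgrad0 : gradient f xstar = 0 := by
    have hf : fderiv ℝ f xstar = 0 :=
      (IsLocalMin.fderiv_eq_zero (IsMinOn.isLocalMin (fun y _ => hmin y)
        (Filter.univ_mem)) )
    simp [gradient, hf]
  -- descent lemma at xstar
  have key : f x - f xstar ≤ L / 2 * ‖x - xstar‖ ^ 2 := by
    have := hsmooth xstar (x - xstar)
    simp [hgrad0] at this
    linarith
  have hbx := hbd x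
  have hnn : (0:ℝ) ≤ ‖x - xstar‖ := norm_nonneg _
  have h1 : 2 / (L * c) * (f x - f xstar) ≤ 2 / (L * c) * (L / 2 * ‖x - xstar‖ ^ 2) := by
    apply mul_le_mul_of_nonneg_left key
    positivity
  have h2 : 2 / (L * c) * (L / 2 * ‖x - xstar‖ ^ 2) = ‖x - xstar‖ * (‖x - xstar‖ / c) := by
    field_simp
  have h3 : ‖x - xstar‖ * (‖x - xstar‖ / c) ≤ ‖x - xstar‖ * ‖gradient f x‖ := by
    apply mul_le_mul_of_nonneg_left _ hnn
    rw [div_le_iff₀ hc] at *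
    linarith [hbd x]
  calc 2 / (L * c) * (f x - f xstar) ≤ ‖x - xstar‖ * (‖x - xstar‖ / c) := by rw [← h2]; exact h1
    _ ≤ ‖x - xstar‖ * ‖gradient f x‖ := h3
    _ = ‖gradient f x‖ * ‖x - xstar‖ := mul_comm _ _
end

section
/- Let f : ℝⁿ → ℝ be differentiable with f ∈ W_PL(μ) for some μ > 0 and associated global minimizer x*, and suppose that √μ·⟨∇f(x), x − x*⟩ ≥ ‖∇f(x)‖·‖x − x*‖ for all x ∈ ℝⁿ. Then f satisfies the restricted convexity property: f(x*) ≥ f(x) + ⟨∇f(x), x* − x⟩ for all x ∈ ℝⁿ. -/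
open scoped RealInnerProductSpace BigOperators

theorem WPL_restricted_convexity {n : ℕ} (f : EuclideanSpace ℝ (Fin n) → ℝ)
    (μ : ℝ) (hμ : 0 < μ) (hdiff : Differentiable ℝ f)
    (xstar : EuclideanSpace ℝ (Fin n)) (hmin : ∀ y, f xstar ≤ f y)
    (hWPL : ∀ x : EuclideanSpace ℝ (Fin n),
      Real.sqrt μ * (f x - f xstar) ≤ ‖gradient f x‖ * ‖x - xstar‖)
    (hangle : ∀ x : EuclideanSpace ℝ (Fin n),
      ‖gradient f x‖ * ‖x - xstar‖ ≤ Real.sqrt μ * ⟪gradient f x, x - xstar⟫) :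
    ∀ x : EuclideanSpace ℝ (Fin n),
      f x + ⟪gradient f x, xstar - x⟫ ≤ f xstar := by
  intro x
  have hs : 0 < Real.sqrt μ := Real.sqrt_pos.2 hμ
  have h := (hWPL x).trans (hangle x)
  have h2 : f x - f xstar ≤ ⟪gradient f x, x - xstar⟫ :=
    le_of_mul_le_mul_left h hs
  have h3 : ⟪gradient f x, xstar - x⟫ = -⟪gradient f x, x - xstar⟫ := by
    rw [← inner_neg_right, neg_sub]
  linarith
end

section
/- Let f : ℝⁿ → ℝ be differentiable and λ_f-strongly convex with λ_f ≥ 0, let g : ℝⁿ → ℝ, set F := f + g, and assume F is λ_F-strongly convex with λ_F ≥ 0. Let x* be a global minimizer of F, set ξ(x) := F(x) − F(x*), and let L > 0 satisfy λ_F − λ_f + L > 0. Then for every x ∈ ℝⁿ with x ≠ x*, there exists y ∈ ℝⁿ such that ⟨∇f(x), y⟩ + (L/2)‖y‖² + g(x + y) − g(x) ≤ − min { ξ(x)/2 , (ξ(x) + (λ_F/2)‖x − x*‖²)² / (2(λ_F − λ_f + L)‖x − x*‖²) }. -/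
open scoped RealInnerProductSpace BigOperators

theorem technical_GPL_lemma {n : ℕ} (f g : EuclideanSpace ℝ (Fin n) → ℝ)
    (lf lF L : ℝ) (hlf : 0 ≤ lf) (hlF : 0 ≤ lF) (hL : 0 < L)
    (hdiff : Differentiable ℝ f)
    (hfsc : ∀ x h : EuclideanSpace ℝ (Fin n),
      f x + ⟪gradient f x, h⟫ + lf / 2 * ‖h‖ ^ 2 ≤ f (x + h))
    (hFsc : ∀ x y : EuclideanSpace ℝ (Fin n), ∀ β : ℝ, 0 ≤ β → β ≤ 1 →
      f (β • x + (1 - β) • y) + g (β • x + (1 - β) • y) ≤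
        β * (f x + g x) + (1 - β) * (f y + g y) - lF * β * (1 - β) / 2 * ‖x - y‖ ^ 2)
    (xstar : EuclideanSpace ℝ (Fin n)) (hmin : ∀ y, f xstar + g xstar ≤ f y + g y)
    (hden : 0 < lF - lf + L) :
    ∀ x : EuclideanSpace ℝ (Fin n), x ≠ xstar → ∃ y : EuclideanSpace ℝ (Fin n),
      ⟪gradient f x, y⟫ + L / 2 * ‖y‖ ^ 2 + g (x + y) - g x ≤
        - min ((f x + g x - (f xstar + g xstar)) / 2)
          ((f x + g x - (f xstar + g xstar) + lF / 2 * ‖x - xstar‖ ^ 2) ^ 2 /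
            (2 * (lF - lf + L) * ‖x - xstar‖ ^ 2)) := by
  intro x hx
  set ξ := f x + g x - (f xstar + g xstar) with hξdef
  have hξ : 0 ≤ ξ := by have := hmin x; simp only [hξdef]; linarith
  set r := ‖x - xstar‖ ^ 2 with hrdef
  have hr : 0 < r := by
    have h0 : x - xstar ≠ 0 := sub_ne_zero.mpr hx
    have := norm_pos_iff.mpr h0
    positivity
  set D := lF - lf + L with hDdef
  have hnum : 0 ≤ ξ + lF / 2 * r := by positivity
  set β := min 1 ((ξ + lF / 2 * r) / (D * r)) with hβdef
  have hβ0 : 0 ≤ β := le_min zero_le_one (div_nonneg hnum (by positivity))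
  have hβ1 : β ≤ 1 := min_le_left _ _
  refine ⟨β • (xstar - x), ?_⟩
  have hxy : x + β • (xstar - x) = β • xstar + (1 - β) • x := by module
  have hny : ‖β • (xstar - x)‖ ^ 2 = β ^ 2 * r := by
    rw [norm_smul, norm_sub_rev, Real.norm_eq_abs, abs_of_nonneg hβ0, hrdef]
    ring
  have h1 := hfsc x (β • (xstar - x))
  have h2 := hFsc xstar x β hβ0 hβ1
  rw [norm_sub_rev] at h2
  rw [← hxy, ← hrdef] at h2
  rw [hny] at h1 ⊢
  have key : ⟪gradient f x, β • (xstar - x)⟫ + L / 2 * (β ^ 2 * r) +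
      g (x + β • (xstar - x)) - g x ≤
      -β * (ξ + lF / 2 * r) + β ^ 2 * D * r / 2 := by
    have h1' : ⟪gradient f x, β • (xstar - x)⟫ ≤
        f (x + β • (xstar - x)) - f x - lf / 2 * (β ^ 2 * r) := by linarith
    nlinarith [h2, sq_nonneg β, sq_nonneg (1 - β)]
  refine key.trans ?_
  rcases le_or_gt ((ξ + lF / 2 * r) / (D * r)) 1 with h | h
  · have hβ : β = (ξ + lF / 2 * r) / (D * r) := min_eq_right h
    have heq : -β * (ξ + lF / 2 * r) + β ^ 2 * D * r / 2 =
        -((ξ + lF / 2 * r) ^ 2 / (2 * D * r)) := by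
      rw [hβ]
      field_simp
      ring
    rw [heq]
    have hle : min (ξ / 2) ((ξ + lF / 2 * r) ^ 2 / (2 * D * r)) ≤
        (ξ + lF / 2 * r) ^ 2 / (2 * D * r) := min_le_right _ _
    linarith
  · have hβ : β = 1 := min_eq_left (le_of_lt h)
    have hDr : D * r < ξ + lF / 2 * r := (one_lt_div (by positivity)).mp h
    have hle : min (ξ / 2) ((ξ + lF / 2 * r) ^ 2 / (2 * D * r)) ≤ ξ / 2 :=
      min_le_left _ _
    rw [hβ]
    nlinarith [mul_nonneg hlF hr.le]
end

section
/- Let f : ℝⁿ → ℝ be differentiable and λ_f-strongly convex with λ_f ≥ 0, let g : ℝⁿ → ℝ, set F := f + g, and assume F is λ_F-strongly convex with λ_F > 0. Let x* be a global minimizer of F, set ξ(x) := F(x) − F(x*), and let L > 0 with λ_f ≤ L. Then for every x ∈ ℝⁿ with x ≠ x*, there exists y ∈ ℝⁿ such that ⟨∇f(x), y⟩ + (L/2)‖y‖² + g(x + y) − g(x) ≤ − ξ(x) · min { 1/2 , λ_F/(λ_F − λ_f + L) }. (Equivalently, the proximal forcing function satisfies μ(x) ≥ min{ L/2, L λ_F/(λ_F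 − λ_f + L) }, so F is strongly PL with this parameter.) -/
open scoped RealInnerProductSpace BigOperators

theorem strongly_convex_is_strongly_PL {n : ℕ} (f g : EuclideanSpace ℝ (Fin n) → ℝ)
    (lf lF L : ℝ) (hlf : 0 ≤ lf) (hlF : 0 < lF) (hL : 0 < L) (hlfL : lf ≤ L)
    (hdiff : Differentiable ℝ f)
    (hfsc : ∀ x h : EuclideanSpace ℝ (Fin n),
      f x + ⟪gradient f x, h⟫ + lf / 2 * ‖h‖ ^ 2 ≤ f (x + h))
    (hFsc : ∀ x y : EuclideanSpace ℝ (Fin n), ∀ β : ℝ, 0 ≤ β → β ≤ 1 →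
      f (β • x + (1 - β) • y) + g (β • x + (1 - β) • y) ≤
        β * (f x + g x) + (1 - β) * (f y + g y) - lF * β * (1 - β) / 2 * ‖x - y‖ ^ 2)
    (xstar : EuclideanSpace ℝ (Fin n)) (hmin : ∀ y, f xstar + g xstar ≤ f y + g y) :
    ∀ x : EuclideanSpace ℝ (Fin n), x ≠ xstar → ∃ y : EuclideanSpace ℝ (Fin n),
      ⟪gradient f x, y⟫ + L / 2 * ‖y‖ ^ 2 + g (x + y) - g x ≤
        -((f x + g x - (f xstar + g xstar)) * min (1 / 2) (lF / (lF - lf + L))) := by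
  intro x hx
  have hc : 0 < lF - lf + L := by linarith
  set β : ℝ := lF / (lF - lf + L) with hβdef
  have hβ0 : 0 ≤ β := le_of_lt (div_pos hlF hc)
  have hβ1 : β ≤ 1 := by
    rw [hβdef, div_le_one hc]; linarith
  have hβc : β * (lF - lf + L) = lF := div_mul_cancel₀ _ (ne_of_gt hc)
  refine ⟨β • (xstar - x), ?_⟩
  have hxy : x + β • (xstar - x) = β • xstar + (1 - β) • x := by module
  have h2 := hfsc x (β • (xstar - x))
  have h3 := hFsc xstar x β hβ0 hβ1
  have hmx := hmin x
  have hinner : ⟪gradient f x, β • (xstar - x)⟫ = β * ⟪gradient f x, xstar - x⟫ :=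
    real_inner_smul_right _ _ _
  have hnorm : ‖β • (xstar - x)‖ ^ 2 = β ^ 2 * ‖xstar - x‖ ^ 2 := by
    rw [norm_smul, Real.norm_eq_abs, abs_of_nonneg hβ0, mul_pow]
  have hD : 0 ≤ ‖xstar - x‖ ^ 2 := sq_nonneg _
  have hm : min (1 / 2 : ℝ) β ≤ β := min_le_right _ _
  rw [hxy, hinner, hnorm] at h2
  rw [hxy, hinner, hnorm]
  have hq : β ^ 2 * (lF - lf + L) * ‖xstar - x‖ ^ 2 = β * lF * ‖xstar - x‖ ^ 2 := by
    rw [sq, mul_assoc β β, hβc]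
  nlinarith [mul_nonneg (sub_nonneg.mpr hmx) (sub_nonneg.mpr hm), hq, h2, h3,
    mul_nonneg (mul_nonneg hβ0 hβ0) hD]
end

section
/- Let f : ℝⁿ → ℝ be convex and differentiable, let g : ℝⁿ → ℝ be convex, set F := f + g, let x* be a global minimizer of F, set ξ(x) := F(x) − F(x*), and let L > 0. Then for every x ∈ ℝⁿ with x ≠ x*, there exists y ∈ ℝⁿ such that ⟨∇f(x), y⟩ + (L/2)‖y‖² + g(x + y) − g(x) ≤ − min { ξ(x)/2 , ξ(x)² / (2L‖x − x*‖²) }. (Equivalently, the proximal forcing function satisfies μ(x) ≥ ξ(x)·min{ L/(2ξ(x)), 1/(2‖x − x*‖²) }, so F is weakly PL.) -/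
/-!
Moving from `x` towards the minimizer `x⋆` by `y = t • (x⋆ - x)`, the gradient inequality for `f`
and the convexity of `g` along the segment bound the proximal model by `-t ξ + (L/2) t² ‖x - x⋆‖²`.
Minimizing this quadratic over `t ∈ [0, 1]` gives `t = min 1 (ξ / (L ‖x - x⋆‖²))` and the bound
`-min (ξ / 2) (ξ² / (2 L ‖x - x⋆‖²))`.
-/

open scoped RealInnerProductSpace

open Set AffineMap

variable {E : Type*} [NormedAddCommGroup E] [InnerProductSpace ℝ E]

theorem ConvexOn.inner_gradient_sub_le [CompleteSpace E] {s : Set E} {f : E → ℝ}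
    (hf : ConvexOn ℝ s f) {x z : E} (hx : x ∈ s) (hz : z ∈ s) (hfx : DifferentiableAt ℝ f x) :
    ⟪gradient f x, z - x⟫ ≤ f z - f x := by
  set φ : ℝ → ℝ := f ∘ lineMap x z
  have hline : ConvexOn ℝ (lineMap x z ⁻¹' s) φ := hf.comp_affineMap _
  have hderiv : HasDerivAt φ ⟪gradient f x, z - x⟫ 0 := by
    have hfx' : HasFDerivAt f (fderiv ℝ f x) (lineMap x z (0 : ℝ)) := by
      simpa using hfx.hasFDerivAt
    simpa [← InnerProductSpace.toDual_apply_apply, gradient] using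
      hfx'.comp_hasDerivAt (0 : ℝ) hasDerivAt_lineMap
  simpa [φ, slope_def_field] using
    hline.le_slope_of_hasDerivAt (by simpa using hx) (by simpa using hz) zero_lt_one hderiv

theorem ConvexOn.le_add_mul_sub {s : Set E} {f : E → ℝ} (hf : ConvexOn ℝ s f) {x z : E}
    (hx : x ∈ s) (hz : z ∈ s) {t : ℝ} (ht : t ∈ Icc (0 : ℝ) 1) :
    f (x + t • (z - x)) ≤ f x + t * (f z - f x) := by
  have h := hf.2 hx hz (sub_nonneg.2 ht.2) ht.1 (sub_add_cancel 1 t)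
  have hpt : (1 - t) • x + t • z = x + t • (z - x) := by
    rw [smul_sub, sub_smul, one_smul]; abel
  rw [hpt, smul_eq_mul, smul_eq_mul] at h
  linarith

theorem exists_mem_Icc_neg_mul_add_sq_le {ξ L N : ℝ} (hξ : 0 ≤ ξ) (hL : 0 < L) (hN : 0 < N) :
    ∃ t ∈ Icc (0 : ℝ) 1, -t * ξ + L / 2 * t ^ 2 * N ≤ -min (ξ / 2) (ξ ^ 2 / (2 * L * N)) := by
  rcases le_total ξ (L * N) with hle | hle
  · refine ⟨ξ / (L * N), ⟨by positivity, (div_le_one (by positivity)).2 hle⟩, ?_⟩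
    have hval : -(ξ / (L * N)) * ξ + L / 2 * (ξ / (L * N)) ^ 2 * N = -(ξ ^ 2 / (2 * L * N)) := by
      field_simp; ring
    rw [hval, neg_le_neg_iff]
    exact min_le_right _ _
  · refine ⟨1, ⟨zero_le_one, le_rfl⟩, ?_⟩
    have := min_le_left (ξ / 2) (ξ ^ 2 / (2 * L * N))
    linarith

theorem convex_is_weakly_PL {n : ℕ} (f g : EuclideanSpace ℝ (Fin n) → ℝ) (L : ℝ) (hL : 0 < L)
    (hdiff : Differentiable ℝ f)
    (hfconv : ConvexOn ℝ Set.univ f) (hgconv : ConvexOn ℝ Set.univ g)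
    (xstar : EuclideanSpace ℝ (Fin n)) (hmin : ∀ y, f xstar + g xstar ≤ f y + g y) :
    ∀ x : EuclideanSpace ℝ (Fin n), x ≠ xstar → ∃ y : EuclideanSpace ℝ (Fin n),
      ⟪gradient f x, y⟫ + L / 2 * ‖y‖ ^ 2 + g (x + y) - g x ≤
        - min ((f x + g x - (f xstar + g xstar)) / 2)
          ((f x + g x - (f xstar + g xstar)) ^ 2 / (2 * L * ‖x - xstar‖ ^ 2)) := by
  intro x hx
  have hN : 0 < ‖x - xstar‖ ^ 2 := by have := sub_ne_zero.2 hx; positivity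
  obtain ⟨t, ht, hquad⟩ := exists_mem_Icc_neg_mul_add_sq_le (sub_nonneg.2 (hmin x)) hL hN
  refine ⟨t • (xstar - x), le_trans ?_ hquad⟩
  have hf := hfconv.inner_gradient_sub_le (mem_univ x) (mem_univ xstar) (hdiff x)
  have hg := hgconv.le_add_mul_sub (mem_univ x) (mem_univ xstar) ht
  have hnorm : ‖t • (xstar - x)‖ ^ 2 = t ^ 2 * ‖x - xstar‖ ^ 2 := by
    rw [norm_smul, Real.norm_of_nonneg ht.1, mul_pow, norm_sub_rev]
  rw [real_inner_smul_right, hnorm]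
  linarith [mul_le_mul_of_nonneg_left hf ht.1]
end

section
/- Let f : ℝⁿ → ℝ be differentiable and L-smooth with L > 0, let g(x) = Σ_{i=1}^n g_i(x_i), set F := f + g, let x* be a global minimizer of F, ξ(x) := F(x) − F(x*), and define λ(x) := −L·inf_{y ∈ ℝⁿ} { ⟨∇f(x), y⟩ + (L/2)‖y‖² + g(x+y) − g(x) }. Assume F is strongly PL with parameter μ > 0, i.e. λ(x) ≥ μ·ξ(x) for all x ∈ ℝⁿ. Let x⁰ ∈ ℝⁿ and let the iterates x^{k+1} := x^k + (u^k)_{[S_k]}, where S_k ⊆ {1,…,n} is nonempty and u^k ∈ ℝⁿ, and suppose there is c > 0 such that for every k < K one has −U_{S_k}(x^k, u^k) ≥ c·λ(x^k). Then ξ(x^K) ≤ exp(−cμK)·ξ(x⁰). -/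
/-!
Applying `u^k` on the block `S_k` changes `g` only in the coordinates of `S_k`, and there the
`L`-smoothness upper bound for `f` is exactly `U_{S_k}(x^k, u^k)`; so each step lowers `F` by at
least `-U_{S_k}(x^k, u^k) ≥ c λ(x^k) ≥ c μ ξ(x^k)`. Hence `ξ(x^{k+1}) ≤ (1 - cμ) ξ(x^k)`, and
`1 - cμ ≤ exp(-cμ)` together with `ξ ≥ 0` gives the geometric rate.
-/

open scoped RealInnerProductSpace BigOperators

/-- The quantity `λ(x) = -L · inf_y { ⟨∇f(x),y⟩ + (L/2)‖y‖² + g(x+y) - g(x) }`. -/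
noncomputable def lamFun {n : ℕ} (f g : EuclideanSpace ℝ (Fin n) → ℝ) (L : ℝ)
    (x : EuclideanSpace ℝ (Fin n)) : ℝ :=
  -L * sInf (Set.range fun y : EuclideanSpace ℝ (Fin n) =>
    ⟪gradient f x, y⟫ + L / 2 * ‖y‖ ^ 2 + g (x + y) - g x)

/-- The masked vector `u_{[S]}`. -/
noncomputable def maskVec {n : ℕ} (S : Finset (Fin n)) (u : EuclideanSpace ℝ (Fin n)) :
    EuclideanSpace ℝ (Fin n) :=
  (EuclideanSpace.equiv (Fin n) ℝ).symm fun i => if i ∈ S then u i else 0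

/-- The block upper bound `U_S(x, u)` with `M = L·I`. -/
noncomputable def USFun {n : ℕ} (f : EuclideanSpace ℝ (Fin n) → ℝ) (gi : Fin n → ℝ → ℝ)
    (L : ℝ) (S : Finset (Fin n)) (x u : EuclideanSpace ℝ (Fin n)) : ℝ :=
  (∑ i ∈ S, gradient f x i * u i) + L / 2 * (∑ i ∈ S, u i ^ 2) +
    ∑ i ∈ S, (gi i (x i + u i) - gi i (x i))

theorem le_exp_neg_mul_of_succ_le_one_sub_mul {a : ℕ → ℝ} {r : ℝ} {K : ℕ}
    (ha : ∀ k, 0 ≤ a k) (hstep : ∀ k < K, a (k + 1) ≤ (1 - r) * a k) :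
    a K ≤ Real.exp (-(r * K)) * a 0 := by
  induction K with
  | zero => simp
  | succ K ih =>
    have hexp : 1 - r ≤ Real.exp (-r) := by linarith [Real.add_one_le_exp (-r)]
    calc a (K + 1) ≤ (1 - r) * a K := hstep K K.lt_succ_self
      _ ≤ Real.exp (-r) * (Real.exp (-(r * K)) * a 0) := by
        gcongr
        exacts [ha K, ih fun k hk => hstep k (hk.trans K.lt_succ_self)]
      _ = Real.exp (-(r * ↑(K + 1))) * a 0 := by
        rw [← mul_assoc, ← Real.exp_add]
        push_cast
        ring_nf

section maskVec

variable {n : ℕ} (S : Finset (Fin n)) (u : EuclideanSpace ℝ (Fin n))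

theorem maskVec_apply (i : Fin n) : maskVec S u i = if i ∈ S then u i else 0 := rfl

theorem inner_maskVec (v : EuclideanSpace ℝ (Fin n)) :
    ⟪v, maskVec S u⟫ = ∑ i ∈ S, v i * u i := by
  simp only [PiLp.inner_apply, RCLike.inner_apply, conj_trivial, maskVec_apply, ite_mul,
    zero_mul, Finset.sum_ite_mem, Finset.univ_inter]
  exact Finset.sum_congr rfl fun i _ => mul_comm _ _

theorem norm_maskVec_sq : ‖maskVec S u‖ ^ 2 = ∑ i ∈ S, u i ^ 2 := by
  rw [EuclideanSpace.norm_eq, Real.sq_sqrt (by positivity)]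
  simp only [maskVec_apply, Real.norm_eq_abs, sq_abs, apply_ite (· ^ 2), ne_eq,
    OfNat.ofNat_ne_zero, not_false_eq_true, zero_pow, Finset.sum_ite_mem, Finset.univ_inter]

theorem sum_add_maskVec_sub_sum (gi : Fin n → ℝ → ℝ) (x : EuclideanSpace ℝ (Fin n)) :
    ∑ i, gi i ((x + maskVec S u) i) - ∑ i, gi i (x i) =
      ∑ i ∈ S, (gi i (x i + u i) - gi i (x i)) := by
  rw [← Finset.sum_sub_distrib, ← Finset.sum_filter_add_sum_filter_not Finset.univ (· ∈ S),
    Finset.filter_mem_eq_inter, Finset.univ_inter, Finset.sum_eq_zero (s := Finset.filter _ _)]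
  · rw [add_zero]
    exact Finset.sum_congr rfl fun i hi => by simp [maskVec_apply, hi]
  · intro i hi
    simp_all [maskVec_apply]

end maskVec

theorem add_maskVec_le_add_USFun {n : ℕ} {f g : EuclideanSpace ℝ (Fin n) → ℝ}
    {gi : Fin n → ℝ → ℝ} {L : ℝ} {x : EuclideanSpace ℝ (Fin n)}
    (hsmooth : ∀ h, f (x + h) ≤ f x + ⟪gradient f x, h⟫ + L / 2 * ‖h‖ ^ 2)
    (hg : ∀ y : EuclideanSpace ℝ (Fin n), g y = ∑ i, gi i (y i))
    (S : Finset (Fin n)) (u : EuclideanSpace ℝ (Fin n)) :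
    f (x + maskVec S u) + g (x + maskVec S u) ≤ f x + g x + USFun f gi L S x u := by
  have hf := hsmooth (maskVec S u)
  rw [inner_maskVec, norm_maskVec_sq] at hf
  have hsep := sum_add_maskVec_sub_sum S u gi x
  rw [← hg, ← hg] at hsep
  unfold USFun
  linarith

theorem strongly_PL_block_descent_rate_general {n : ℕ} (f g : EuclideanSpace ℝ (Fin n) → ℝ)
    (gi : Fin n → ℝ → ℝ) (L μ c : ℝ) (hc : 0 < c)
    (hsmooth : ∀ x h : EuclideanSpace ℝ (Fin n),
      f (x + h) ≤ f x + ⟪gradient f x, h⟫ + L / 2 * ‖h‖ ^ 2)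
    (hg : ∀ x : EuclideanSpace ℝ (Fin n), g x = ∑ i, gi i (x i))
    (xstar : EuclideanSpace ℝ (Fin n)) (hmin : ∀ y, f xstar + g xstar ≤ f y + g y)
    (hSPL : ∀ x : EuclideanSpace ℝ (Fin n),
      μ * (f x + g x - (f xstar + g xstar)) ≤ lamFun f g L x)
    (X : ℕ → EuclideanSpace ℝ (Fin n)) (S : ℕ → Finset (Fin n))
    (u : ℕ → EuclideanSpace ℝ (Fin n))
    (hiter : ∀ k : ℕ, X (k + 1) = X k + maskVec (S k) (u k))
    (K : ℕ)
    (hprog : ∀ k < K, c * lamFun f g L (X k) ≤ -USFun f gi L (S k) (X k) (u k)) :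
    f (X K) + g (X K) - (f xstar + g xstar) ≤
      Real.exp (-(c * μ * K)) * (f (X 0) + g (X 0) - (f xstar + g xstar)) := by
  refine le_exp_neg_mul_of_succ_le_one_sub_mul (fun k => sub_nonneg.2 (hmin (X k)))
    fun k hk => ?_
  have hdesc := add_maskVec_le_add_USFun (hsmooth (X k)) hg (S k) (u k)
  rw [← hiter] at hdesc
  have hPL := mul_le_mul_of_nonneg_left (hSPL (X k)) hc.le
  linarith [hprog k hk]

theorem strongly_PL_block_descent_rate {n : ℕ} (f g : EuclideanSpace ℝ (Fin n) → ℝ)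
    (gi : Fin n → ℝ → ℝ) (L μ c : ℝ) (hL : 0 < L) (hμ : 0 < μ) (hc : 0 < c)
    (hdiff : Differentiable ℝ f)
    (hsmooth : ∀ x h : EuclideanSpace ℝ (Fin n),
      f (x + h) ≤ f x + ⟪gradient f x, h⟫ + L / 2 * ‖h‖ ^ 2)
    (hg : ∀ x : EuclideanSpace ℝ (Fin n), g x = ∑ i, gi i (x i))
    (xstar : EuclideanSpace ℝ (Fin n)) (hmin : ∀ y, f xstar + g xstar ≤ f y + g y)
    (hSPL : ∀ x : EuclideanSpace ℝ (Fin n),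
      μ * (f x + g x - (f xstar + g xstar)) ≤ lamFun f g L x)
    (X : ℕ → EuclideanSpace ℝ (Fin n)) (S : ℕ → Finset (Fin n))
    (u : ℕ → EuclideanSpace ℝ (Fin n))
    (hSne : ∀ k, (S k).Nonempty)
    (hiter : ∀ k : ℕ, X (k + 1) = X k + maskVec (S k) (u k))
    (K : ℕ)
    (hprog : ∀ k < K, c * lamFun f g L (X k) ≤ -USFun f gi L (S k) (X k) (u k)) :
    f (X K) + g (X K) - (f xstar + g xstar) ≤
      Real.exp (-(c * μ * K)) * (f (X 0) + g (X 0) - (f xstar + g xstar)) :=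
  strongly_PL_block_descent_rate_general f g gi L μ c hc hsmooth hg xstar hmin hSPL X S u hiter K
    hprog
end
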